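/- Let Q : Matrix (Fin n) (Fin n) ℂ, b ∈ ℂⁿ, and suppose for all nonzero x ∈ ℂⁿ we have xᴴ Q x ≠ 0. Let V : Matrix (Fin n) (Fin m) ℂ have linearly independent columns and suppose the exact solution u of Q u = b lies in the column space of V. Then the Galerkin system: find z ∈ ℂᵐ with Vᴴ Q V z = Vᴴ b, has a unique solution, and V z = u. -/

import Mathlib

/-!
Since `zᴴ (Vᴴ Q V) z = (V z)ᴴ Q (V z)`, a nonzero kernel vector `z` of `Vᴴ Q V` would give the
nonzero vector `V z` with vanishing quadratic form, so `Vᴴ Q V` is injective. The coordinate vector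
of `u` in the columns of `V` solves the Galerkin system, hence is its only solution.
-/

open Matrix

theorem Matrix.star_dotProduct_conjTranspose_mul_mul_mulVec {R l n : Type*} [Fintype l]
    [Fintype n] [CommSemiring R] [StarRing R] (Q : Matrix l l R) (V : Matrix l n R) (z : n → R) :
    star z ⬝ᵥ (Vᴴ * Q * V) *ᵥ z = star (V *ᵥ z) ⬝ᵥ Q *ᵥ (V *ᵥ z) := by
  rw [← mulVec_mulVec, ← mulVec_mulVec, dotProduct_mulVec, ← star_mulVec]

theorem Matrix.mulVec_injective_conjTranspose_mul_mul {R l n : Type*} [Fintype l] [Fintype n]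
    [CommRing R] [StarRing R] {Q : Matrix l l R} {V : Matrix l n R}
    (hQ : ∀ x : l → R, x ≠ 0 → star x ⬝ᵥ Q *ᵥ x ≠ 0) (hV : Function.Injective V.mulVec) :
    Function.Injective (Vᴴ * Q * V).mulVec := by
  refine (injective_iff_map_eq_zero (Vᴴ * Q * V).mulVecLin).mpr fun z hz => ?_
  by_contra hz0
  have hVz : V *ᵥ z ≠ 0 := fun h => hz0 (hV (h.trans V.mulVec_zero.symm))
  apply hQ _ hVz
  rw [← star_dotProduct_conjTranspose_mul_mul_mulVec, ← mulVecLin_apply, hz, dotProduct_zero]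

/-- Unique solvability and exactness of the Galerkin system. -/
theorem stmt_9 {n m : ℕ} (Q : Matrix (Fin n) (Fin n) ℂ) (b u : Fin n → ℂ)
    (hnum : ∀ x : Fin n → ℂ, x ≠ 0 → star x ⬝ᵥ Q.mulVec x ≠ 0)
    (V : Matrix (Fin n) (Fin m) ℂ) (hV : Function.Injective V.mulVec)
    (hu : Q.mulVec u = b) (hmem : ∃ z : Fin m → ℂ, V.mulVec z = u) :
    (∃! z : Fin m → ℂ, (Vᴴ * Q * V).mulVec z = Vᴴ.mulVec b) ∧
    (∀ z : Fin m → ℂ, (Vᴴ * Q * V).mulVec z = Vᴴ.mulVec b → V.mulVec z = u) := by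
  obtain ⟨z₀, rfl⟩ := hmem
  have hG := mulVec_injective_conjTranspose_mul_mul hnum hV
  have hz₀ : (Vᴴ * Q * V) *ᵥ z₀ = Vᴴ *ᵥ b := by
    rw [← mulVec_mulVec, ← mulVec_mulVec, hu]
  exact ⟨⟨z₀, hz₀, fun z hz => hG (hz.trans hz₀.symm)⟩,
    fun z hz => congrArg V.mulVec (hG (hz.trans hz₀.symm))⟩
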